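/- Let p and q be odd primes and let a, b be integers with 0 ≤ a, b ≤ q − 1 and q not dividing a + b + 1. For a nonnegative integer n, let b_n = Σ (−1)^{i+j+k+l} · binom(a/q, i) · binom(b/q, j) · binom(1/q, k) · binom(−(a+b+1)/q, l), the sum taken over all nonnegative integers i, j, k, l with p·i + p^2·j + p^3·k + l = n. Then ord_q(b_n) = −n − ord_q(n!); in particular b_n ≠ 0 and q^{n + ⌊n/(q−1)⌋} · b_n is an integer. -/

import Mathlib

/-!
Write `binom(c/q, l) = ∏_{i<l} (c - i q) / (q^l l!)`. The prime-to-`q` part of `l!` divides the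
numerator, so `q^(l + ord_q l!) binom(c/q, l)` is an integer, prime to `q` when `q ∤ c`. In `b_n`
the term `(0, 0, 0, n)` therefore has denominator exactly `q^(n + ord_q n!)`. Every other term has
`i + j + k + l < n` because `p ≥ 2`, and by superadditivity of `l ↦ ord_q l!` its denominator is a
smaller power of `q`. Legendre's bound `ord_q n! ≤ n / (q - 1)` gives the integrality.
-/

/-- The generalized binomial coefficient `binom(α, l) = α(α−1)⋯(α−l+1)/l!`
for a rational `α` and a natural number `l`. -/
noncomputable def qbinom (α : ℚ) (l : ℕ) : ℚ :=
  (∏ i ∈ Finset.range l, (α - i)) / (Nat.factorial l)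

/-- The coefficient `b_n = Σ_{pi+p²j+p³k+l=n} (−1)^{i+j+k+l} binom(a/q, i)
binom(b/q, j) binom(1/q, k) binom(−(a+b+1)/q, l)` from the proof of Theorem 3. -/
noncomputable def rungeCoeffB (p q a b n : ℕ) : ℚ :=
  ∑ v ∈ (Finset.range (n + 1) ×ˢ Finset.range (n + 1) ×ˢ Finset.range (n + 1) ×ˢ
        Finset.range (n + 1)).filter
      (fun v : ℕ × ℕ × ℕ × ℕ => p * v.1 + p ^ 2 * v.2.1 + p ^ 3 * v.2.2.1 + v.2.2.2 = n),
    (-1 : ℚ) ^ (v.1 + v.2.1 + v.2.2.1 + v.2.2.2) *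
      qbinom ((a : ℚ) / q) v.1 * qbinom ((b : ℚ) / q) v.2.1 *
      qbinom (1 / q) v.2.2.1 * qbinom (-((a : ℚ) + b + 1) / q) v.2.2.2

open Finset Nat

theorem factorial_dvd_prod_range_sub (w : ℤ) (l : ℕ) :
    (l ! : ℤ) ∣ ∏ i ∈ range l, (w - i) := by
  rw [← descPochhammer_eval_eq_prod_range, Polynomial.eval_eq_smeval,
    Ring.descPochhammer_eq_factorial_smul_choose, nsmul_eq_mul]
  exact dvd_mul_right _ _

-- Multiplying by `v ^ l`, where `v q ≡ 1 [ZMOD m]`, turns the product into `l` consecutive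
-- integers modulo `m`.
theorem dvd_prod_range_sub_mul_of_isCoprime {m q : ℤ} (hmq : IsCoprime m q) {l : ℕ}
    (hm : m ∣ l !) (c : ℤ) : m ∣ ∏ i ∈ range l, (c - i * q) := by
  obtain ⟨u, v, huv⟩ := hmq
  have hvq : v * q ≡ 1 [ZMOD m] := Int.modEq_iff_dvd.mpr ⟨u, by linarith⟩
  have hcong : v ^ l * ∏ i ∈ range l, (c - i * q) ≡ ∏ i ∈ range l, (v * c - i) [ZMOD m] := by
    rw [← card_range l, ← prod_const, card_range, ← prod_mul_distrib]
    refine Int.ModEq.prod fun i _ => ?_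
    have hi := (hvq.mul_left (i : ℤ)).sub_left (v * c)
    convert hi using 1 <;> ring
  have hv : IsCoprime m (v ^ l) := IsCoprime.pow_right ⟨u, q, by linarith⟩
  refine hv.dvd_of_dvd_mul_left ?_
  exact (Int.ModEq.dvd_iff hcong).mpr (hm.trans (factorial_dvd_prod_range_sub _ l))

theorem qbinom_intCast_div_natCast {q : ℕ} (hq : q ≠ 0) (c : ℤ) (l : ℕ) :
    qbinom ((c : ℚ) / q) l = ((∏ i ∈ range l, (c - i * q) : ℤ) : ℚ) / (q ^ l * l !) := by
  have hq' : (q : ℚ) ≠ 0 := by exact_mod_cast hq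
  have h : ∀ i ∈ range l, (c : ℚ) / q - i = ((c - i * q : ℤ) : ℚ) / q := fun i _ => by
    push_cast
    field_simp
  rw [qbinom, prod_congr rfl h, prod_div_distrib, prod_const, card_range, div_div]
  push_cast
  rfl

theorem exists_pow_mul_qbinom_eq_intCast {q : ℕ} (hq : q.Prime) (c : ℤ) (l : ℕ) :
    ∃ m : ℤ, (q : ℚ) ^ (l + padicValNat q l !) * qbinom ((c : ℚ) / q) l = m ∧
      (¬ (q : ℤ) ∣ c → ¬ (q : ℤ) ∣ m) := by
  set l₀ := ordCompl[q] l !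
  have hsplit : q ^ padicValNat q l ! * l₀ = l ! := by
    rw [← Nat.factorization_def _ hq]
    exact Nat.ordProj_mul_ordCompl_eq_self _ _
  have hl₀ : IsCoprime (l₀ : ℤ) q :=
    Nat.isCoprime_iff_coprime.mpr (Nat.coprime_ordCompl hq l.factorial_ne_zero).symm
  obtain ⟨m, hm⟩ := dvd_prod_range_sub_mul_of_isCoprime hl₀
    (Int.natCast_dvd_natCast.mpr (Nat.ordCompl_dvd _ _)) c
  refine ⟨m, ?_, fun hc hqm => hc ?_⟩
  · have hq' : (q : ℚ) ≠ 0 := by exact_mod_cast hq.ne_zero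
    have hl₀' : (l₀ : ℚ) ≠ 0 := by exact_mod_cast (Nat.ordCompl_pos q l.factorial_ne_zero).ne'
    have hfac : (l ! : ℚ) = q ^ padicValNat q l ! * l₀ := by exact_mod_cast hsplit.symm
    rw [qbinom_intCast_div_natCast hq.ne_zero, hm, hfac]
    push_cast
    field_simp
    ring
  · obtain ⟨i, -, hi⟩ := (Nat.prime_iff_prime_int.mp hq).exists_mem_finset_dvd
      (hm ▸ dvd_mul_of_dvd_right hqm _)
    simpa using dvd_add hi (dvd_mul_left (q : ℤ) i)

section FactorialValuation

variable {q : ℕ} [Fact q.Prime]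

theorem padicValNat_factorial_add_le (a b : ℕ) :
    padicValNat q a ! + padicValNat q b ! ≤ padicValNat q (a + b)! := by
  have hc : (a + b).choose b ≠ 0 := (Nat.choose_pos (by omega)).ne'
  rw [← Nat.add_choose_mul_factorial_mul_factorial a b,
    padicValNat.mul (mul_ne_zero hc a.factorial_ne_zero) b.factorial_ne_zero,
    padicValNat.mul hc a.factorial_ne_zero]
  omega

theorem padicValNat_factorial_mono : Monotone fun n => padicValNat q n ! := by
  intro a b hab
  obtain ⟨c, rfl⟩ := Nat.exists_eq_add_of_le hab
  exact (Nat.le_add_right _ _).trans (padicValNat_factorial_add_le a c)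

theorem padicValNat_factorial_le_div_sub_one (n : ℕ) : padicValNat q n ! ≤ n / (q - 1) := by
  have hq := (Fact.out : q.Prime).two_le
  rw [Nat.le_div_iff_mul_le (by omega), mul_comm, sub_one_mul_padicValNat_factorial]
  omega

theorem add_padicValNat_factorial_lt {i j k l n : ℕ}
    (h : i + j + k + l < n) :
    i + j + k + l + (padicValNat q i ! + padicValNat q j ! +
      padicValNat q k ! + padicValNat q l !) < n + padicValNat q n ! := by
  have h₁ := padicValNat_factorial_add_le (q := q) i j
  have h₂ := padicValNat_factorial_add_le (q := q) (i + j) k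
  have h₃ := padicValNat_factorial_add_le (q := q) (i + j + k) l
  have h₄ := padicValNat_factorial_mono (q := q) h.le
  simp only at h₄
  omega

end FactorialValuation

theorem padicValRat_eq_neg_of_pow_mul_eq_intCast {q N : ℕ} [Fact q.Prime] {x : ℚ} {M : ℤ}
    (hM : ¬ (q : ℤ) ∣ M) (h : (q : ℚ) ^ N * x = M) : padicValRat q x = -N := by
  have hM0 : (M : ℚ) ≠ 0 := Int.cast_ne_zero.mpr (by rintro rfl; exact hM (dvd_zero _))
  have hq0 : (q : ℚ) ^ N ≠ 0 := pow_ne_zero _ (by exact_mod_cast (Fact.out : q.Prime).ne_zero)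
  have hx : x ≠ 0 := right_ne_zero_of_mul (h ▸ hM0)
  have hval := congrArg (padicValRat q) h
  rw [padicValRat.mul hq0 hx, padicValRat.pow,
    padicValRat.self (Fact.out : q.Prime).one_lt, padicValRat.of_int,
    padicValInt.eq_zero_of_not_dvd hM] at hval
  omega

theorem add_lt_of_mul_add_eq {p i j k l n : ℕ} (hp : 2 ≤ p)
    (h : p * i + p ^ 2 * j + p ^ 3 * k + l = n) (hne : (i, j, k, l) ≠ (0, 0, 0, n)) :
    i + j + k + l < n := by
  have hi : 2 * i ≤ p * i := Nat.mul_le_mul_right i hp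
  have hj : 2 * j ≤ p ^ 2 * j := Nat.mul_le_mul_right j (hp.trans (Nat.le_self_pow two_ne_zero p))
  have hk : 2 * k ≤ p ^ 3 * k :=
    Nat.mul_le_mul_right k (hp.trans (Nat.le_self_pow three_ne_zero p))
  rcases Nat.eq_zero_or_pos (i + j + k) with h0 | h0
  · obtain ⟨rfl, rfl, rfl⟩ : i = 0 ∧ j = 0 ∧ k = 0 := by omega
    simp_all
  · omega

noncomputable def rungeTerm (q a b : ℕ) (v : ℕ × ℕ × ℕ × ℕ) : ℚ :=
  (-1 : ℚ) ^ (v.1 + v.2.1 + v.2.2.1 + v.2.2.2) *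
    qbinom ((a : ℚ) / q) v.1 * qbinom ((b : ℚ) / q) v.2.1 *
    qbinom (1 / q) v.2.2.1 * qbinom (-((a : ℚ) + b + 1) / q) v.2.2.2

theorem rungeTerm_zero_zero_zero (q a b n : ℕ) :
    rungeTerm q a b (0, 0, 0, n) = (-1) ^ n * qbinom (-((a : ℚ) + b + 1) / q) n := by
  simp [rungeTerm, qbinom]

theorem exists_pow_mul_rungeTerm_eq_intCast {q : ℕ} (hq : q.Prime) (a b i j k l : ℕ) :
    ∃ m : ℤ, (q : ℚ) ^ (i + j + k + l + (padicValNat q i ! + padicValNat q j ! +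
      padicValNat q k ! + padicValNat q l !)) * rungeTerm q a b (i, j, k, l) = m := by
  obtain ⟨ma, hma, -⟩ := exists_pow_mul_qbinom_eq_intCast hq a i
  obtain ⟨mb, hmb, -⟩ := exists_pow_mul_qbinom_eq_intCast hq b j
  obtain ⟨m₁, hm₁, -⟩ := exists_pow_mul_qbinom_eq_intCast hq 1 k
  obtain ⟨mc, hmc, -⟩ := exists_pow_mul_qbinom_eq_intCast hq (-(a + b + 1)) l
  push_cast at hma hmb hm₁ hmc
  refine ⟨(-1) ^ (i + j + k + l) * ma * mb * m₁ * mc, ?_⟩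
  push_cast
  rw [← hma, ← hmb, ← hm₁, ← hmc, rungeTerm]
  ring

theorem pow_mul_rungeTerm_mem_zmultiples {q : ℕ} (hq : q.Prime) (a b i j k l : ℕ) {e : ℕ}
    (he : i + j + k + l + (padicValNat q i ! + padicValNat q j ! +
      padicValNat q k ! + padicValNat q l !) < e) :
    (q : ℚ) ^ e * rungeTerm q a b (i, j, k, l) ∈ AddSubgroup.zmultiples (q : ℚ) := by
  obtain ⟨m, hm⟩ := exists_pow_mul_rungeTerm_eq_intCast hq a b i j k l
  obtain ⟨d, rfl⟩ := Nat.exists_eq_add_of_lt he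
  refine AddSubgroup.mem_zmultiples_iff.mpr ⟨q ^ d * m, ?_⟩
  rw [zsmul_eq_mul]
  push_cast
  rw [← hm]
  ring

theorem exists_pow_mul_rungeCoeffB_eq_intCast {p q a b : ℕ} (hp : 2 ≤ p) (hq : q.Prime)
    (hnd : ¬ q ∣ a + b + 1) (n : ℕ) :
    ∃ M : ℤ, ¬ (q : ℤ) ∣ M ∧
      (q : ℚ) ^ (n + padicValNat q n !) * rungeCoeffB p q a b n = M := by
  have := Fact.mk hq
  set S := (range (n + 1) ×ˢ range (n + 1) ×ˢ range (n + 1) ×ˢ range (n + 1)).filter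
    fun v : ℕ × ℕ × ℕ × ℕ => p * v.1 + p ^ 2 * v.2.1 + p ^ 3 * v.2.2.1 + v.2.2.2 = n
  have hB : rungeCoeffB p q a b n = ∑ v ∈ S, rungeTerm q a b v := rfl
  have hmain : ((0, 0, 0, n) : ℕ × ℕ × ℕ × ℕ) ∈ S := by simp [S]
  have hrest : (q : ℚ) ^ (n + padicValNat q n !) * ∑ v ∈ S.erase (0, 0, 0, n), rungeTerm q a b v
      ∈ AddSubgroup.zmultiples (q : ℚ) := by
    rw [mul_sum]
    refine AddSubgroup.sum_mem _ fun ⟨i, j, k, l⟩ hv => pow_mul_rungeTerm_mem_zmultiples hq a b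
      i j k l (add_padicValNat_factorial_lt (add_lt_of_mul_add_eq hp
        (mem_filter.mp (mem_of_mem_erase hv)).2 (ne_of_mem_erase hv)))
  obtain ⟨r, hr⟩ := AddSubgroup.mem_zmultiples_iff.mp hrest
  obtain ⟨m₀, hm₀, hm₀q⟩ := exists_pow_mul_qbinom_eq_intCast hq (-(a + b + 1)) n
  push_cast at hm₀
  refine ⟨(-1) ^ n * m₀ + r * q, fun hdvd => hm₀q ?_ ?_, ?_⟩
  · exact fun h => hnd (by exact_mod_cast Int.dvd_neg.mp h)
  · rwa [← (isUnit_neg_one.pow n).dvd_mul_left, ← dvd_add_left (dvd_mul_left _ r)]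
  · rw [hB, ← add_sum_erase _ _ hmain, mul_add, ← hr, rungeTerm_zero_zero_zero, zsmul_eq_mul]
    push_cast
    rw [← hm₀]
    ring

theorem ord_q_rungeCoeffB_general
    (p q a b n : ℕ) (hp : p.Prime) (hq : q.Prime)
    (hnd : ¬ q ∣ (a + b + 1)) :
    padicValRat q (rungeCoeffB p q a b n) =
        -(n : ℤ) - (padicValNat q (Nat.factorial n) : ℤ) ∧
      rungeCoeffB p q a b n ≠ 0 ∧
      ∃ m : ℤ, (q : ℚ) ^ (n + n / (q - 1)) * rungeCoeffB p q a b n = (m : ℚ) := by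
  have := Fact.mk hq
  obtain ⟨M, hM, hBM⟩ := exists_pow_mul_rungeCoeffB_eq_intCast hp.two_le hq hnd n
  refine ⟨?_, fun h0 => hM ?_, ?_⟩
  · rw [padicValRat_eq_neg_of_pow_mul_eq_intCast hM hBM]
    push_cast
    ring
  · rw [h0, mul_zero, eq_comm, Int.cast_eq_zero] at hBM
    exact hBM ▸ dvd_zero _
  · have hle := padicValNat_factorial_le_div_sub_one (q := q) n
    refine ⟨q ^ (n / (q - 1) - padicValNat q n !) * M, ?_⟩
    rw [show n + n / (q - 1) = n / (q - 1) - padicValNat q n ! + (n + padicValNat q n !) by omega,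
      pow_add, mul_assoc, hBM]
    push_cast
    ring

/-- Let `p` and `q` be odd primes and `a, b` integers with `0 ≤ a, b ≤ q − 1` and
`q ∤ a + b + 1`.  Then `ord_q(b_n) = −n − ord_q(n!)`; in particular `b_n ≠ 0` and
`q^{n + ⌊n/(q−1)⌋} · b_n` is an integer. -/
theorem ord_q_rungeCoeffB
    (p q a b n : ℕ) (hp : p.Prime) (hpodd : Odd p) (hq : q.Prime) (hqodd : Odd q)
    (ha : a ≤ q - 1) (hb : b ≤ q - 1) (hnd : ¬ q ∣ (a + b + 1)) :
    padicValRat q (rungeCoeffB p q a b n) =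
        -(n : ℤ) - (padicValNat q (Nat.factorial n) : ℤ) ∧
      rungeCoeffB p q a b n ≠ 0 ∧
      ∃ m : ℤ, (q : ℚ) ^ (n + n / (q - 1)) * rungeCoeffB p q a b n = (m : ℚ) :=
  ord_q_rungeCoeffB_general p q a b n hp hq hnd
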